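/- In ℝ², let Ω = {(x, y) : |x| ≤ π/2, |y| ≤ 1/2} and define the probability measure μ(A) = |A ∩ Ω|/|Ω| for measurable A ⊆ ℝ². Then μ is log-concave, |B₂²| = |Ω| = π, μ(t·B₂²) ≤ μ(t·Ω) for all t > 0, and yet B₂² is not contained in Ω. -/

import Mathlib

/-!
The substance is the log-concavity of `μ`, i.e. the multiplicative Brunn–Minkowski inequality
`|λA + (1 - λ)B| ≥ |A| ^ λ |B| ^ (1 - λ)` for compact sets in the plane, restricted to the convex
set `Ω`. On the line, `|K + L| ≥ |K| + |L|` because the translates `K + min L` and `max K + L` lie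
in `K + L` and meet in a single point; weighted AM–GM turns this into the multiplicative form.
In the plane, Fubini reduces the inequality to the one-dimensional Prékopa–Leindler inequality for
the lengths of the vertical sections, which in turn follows from the line case applied to
superlevel sets via the layer-cake formula.

The comparison `μ(t • B) ≤ μ(t • Ω)` holds because `t • Ω` and `Ω` are nested while
`|t • B| = |t • Ω|`, and the point `(0, 1)` of the disk lies outside `Ω`.
-/

open MeasureTheory Set Pointwise Real
open scoped ENNReal

theorem ENNReal.rpow_mul_rpow_one_sub_le {lam : ℝ} (h₀ : 0 < lam) (h₁ : lam < 1) (x y : ℝ≥0∞) :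
    x ^ lam * y ^ (1 - lam) ≤ ENNReal.ofReal lam * x + ENNReal.ofReal (1 - lam) * y := by
  have h₁' : 0 < 1 - lam := sub_pos.2 h₁
  have := ENNReal.young_inequality (x ^ lam) (y ^ (1 - lam)) (.inv_one_sub_inv h₀ h₁)
  rwa [ENNReal.rpow_rpow_inv h₀.ne', ENNReal.rpow_rpow_inv h₁'.ne', ENNReal.ofReal_inv_of_pos h₀,
    ENNReal.ofReal_inv_of_pos h₁', div_eq_mul_inv, div_eq_mul_inv, inv_inv, inv_inv,
    mul_comm x, mul_comm y] at this

theorem ENNReal.mul_rpow_mul_mul_rpow_one_sub {lam : ℝ} (h₀ : 0 ≤ lam) (h₁ : lam ≤ 1)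
    (a b c d : ℝ≥0∞) :
    (a * b) ^ lam * (c * d) ^ (1 - lam) = a ^ lam * c ^ (1 - lam) * (b ^ lam * d ^ (1 - lam)) := by
  rw [ENNReal.mul_rpow_of_nonneg _ _ h₀, ENNReal.mul_rpow_of_nonneg _ _ (sub_nonneg.2 h₁)]
  ring

theorem ENNReal.rpow_mul_rpow_one_sub_self {lam : ℝ} (h₀ : 0 ≤ lam) (h₁ : lam ≤ 1) (x : ℝ≥0∞) :
    x ^ lam * x ^ (1 - lam) = x := by
  rw [← ENNReal.rpow_add_of_nonneg _ _ h₀ (sub_nonneg.2 h₁), add_sub_cancel, ENNReal.rpow_one]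

theorem ENNReal.ofReal_mul_lt_self {t : ℝ} (ht : t < 1) {M : ℝ≥0∞} (hM₀ : M ≠ 0) (hM : M ≠ ⊤) :
    ENNReal.ofReal t * M < M := by
  simpa [mul_comm] using ENNReal.mul_lt_mul_right hM₀ hM (ENNReal.ofReal_lt_one.2 ht)

theorem MeasureTheory.lintegral_eq_mul_setLIntegral_Ioo_measure_le {α : Type*} [MeasurableSpace α]
    (μ : Measure α) {f : α → ℝ≥0∞} (hf : Measurable f) {M : ℝ≥0∞} (hM₀ : M ≠ 0) (hM : M ≠ ⊤)
    (hfM : ∀ x, f x ≤ M) :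
    ∫⁻ x, f x ∂μ = M * ∫⁻ t in Ioo 0 1, μ {x | ENNReal.ofReal t * M ≤ f x} := by
  have hfM' : ∀ x, f x / M ≠ ⊤ := fun x => ENNReal.div_ne_top (ne_top_of_le_ne_top hM (hfM x)) hM₀
  have hlevel : ∀ t : ℝ, 0 < t →
      {x | t ≤ (f x / M).toReal} = {x | ENNReal.ofReal t * M ≤ f x} := fun t ht => by
    ext x
    rw [mem_ofPred_eq, mem_ofPred_eq, ← ENNReal.ofReal_le_iff_le_toReal (hfM' x),
      ENNReal.le_div_iff_mul_le (.inl hM₀) (.inl hM)]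
  have hempty : ∀ t : ℝ, 1 < t → {x | ENNReal.ofReal t * M ≤ f x} = ∅ := fun t ht => by
    refine eq_empty_of_forall_notMem fun x hx => ?_
    have : M * 1 < M * ENNReal.ofReal t :=
      ENNReal.mul_lt_mul_right hM₀ hM (ENNReal.one_lt_ofReal.2 ht)
    rw [mul_one, mul_comm] at this
    exact this.not_ge (hx.trans (hfM x))
  calc ∫⁻ x, f x ∂μ = M * ∫⁻ x, ENNReal.ofReal (f x / M).toReal ∂μ := by
        simp_rw [ENNReal.ofReal_toReal (hfM' _), div_eq_mul_inv]
        rw [lintegral_mul_const' _ _ (ENNReal.inv_ne_top.2 hM₀), mul_comm,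
          mul_assoc, ENNReal.inv_mul_cancel hM₀ hM, mul_one]
    _ = M * ∫⁻ t in Ioi 0, μ {x | ENNReal.ofReal t * M ≤ f x} := by
        rw [lintegral_eq_lintegral_meas_le μ (.of_forall fun _ => ENNReal.toReal_nonneg)
          (hf.div_const M).ennreal_toReal.aemeasurable]
        congr 1
        exact setLIntegral_congr_fun measurableSet_Ioi fun t ht => by rw [hlevel t ht]
    _ = M * ∫⁻ t in Ioo 0 1, μ {x | ENNReal.ofReal t * M ≤ f x} := by
        rw [← Ioc_union_Ioi_eq_Ioi zero_le_one, lintegral_union measurableSet_Ioi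
          (Ioc_disjoint_Ioi le_rfl), setLIntegral_congr Ioo_ae_eq_Ioc.symm,
          setLIntegral_congr_fun measurableSet_Ioi fun t ht => by rw [hempty t ht, measure_empty],
          lintegral_zero, add_zero]

namespace MeasureTheory.Measure

def IsLogConcave {E : Type*} [AddCommGroup E] [Module ℝ E] [TopologicalSpace E]
    [MeasurableSpace E] (μ : Measure E) : Prop :=
  ∀ A B : Set E, IsCompact A → A.Nonempty → IsCompact B → B.Nonempty →
    ∀ lam : ℝ, 0 < lam → lam < 1 → μ A ^ lam * μ B ^ (1 - lam) ≤ μ (lam • A + (1 - lam) • B)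

end MeasureTheory.Measure

theorem IsCompact.preimage_prodMk_left {X Y : Type*} [TopologicalSpace X] [TopologicalSpace Y]
    [T2Space X] [T2Space Y] {K : Set (X × Y)} (hK : IsCompact K) (a : X) :
    IsCompact (Prod.mk a ⁻¹' K) :=
  (hK.image continuous_snd).of_isClosed_subset (hK.isClosed.preimage (by fun_prop))
    fun y hy => ⟨(a, y), hy, rfl⟩

namespace Real

theorem volume_add_volume_le_volume_add_of_isCompact {K L : Set ℝ} (hK : IsCompact K)
    (hK₀ : K.Nonempty) (hL : IsCompact L) (hL₀ : L.Nonempty) :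
    volume K + volume L ≤ volume (K + L) := by
  set k := sSup K
  set l := sInf L
  have hk : k ∈ K := hK.sSup_mem hK₀
  have hl : l ∈ L := hL.sInf_mem hL₀
  have hKL : (l +ᵥ K) ∪ (k +ᵥ L) ⊆ K + L := by
    rintro _ (⟨a, ha, rfl⟩ | ⟨b, hb, rfl⟩)
    · exact ⟨a, ha, l, hl, add_comm _ _⟩
    · exact ⟨k, hk, b, hb, rfl⟩
  have hinter : (l +ᵥ K) ∩ (k +ᵥ L) ⊆ {k + l} := by
    rintro _ ⟨⟨a, ha, rfl⟩, ⟨b, hb, hab⟩⟩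
    have : a ≤ k := le_csSup hK.bddAbove ha
    have : l ≤ b := csInf_le hL.bddBelow hb
    simp only [vadd_eq_add, mem_singleton_iff] at hab ⊢
    linarith
  calc volume K + volume L = volume (l +ᵥ K) + volume (k +ᵥ L) := by
        rw [measure_vadd, measure_vadd]
    _ = volume ((l +ᵥ K) ∪ (k +ᵥ L)) + volume ((l +ᵥ K) ∩ (k +ᵥ L)) :=
        (measure_union_add_inter _ ((hL.vadd k).measurableSet)).symm
    _ ≤ volume (K + L) + 0 :=
        add_le_add (measure_mono hKL) ((measure_mono hinter).trans (measure_singleton _).le)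
    _ = volume (K + L) := add_zero _

theorem volume_add_volume_le_volume_add {S T : Set ℝ} (hS : MeasurableSet S) (hS₀ : S.Nonempty)
    (hT : MeasurableSet T) (hT₀ : T.Nonempty) :
    volume S + volume T ≤ volume (S + T) := by
  obtain ⟨s, hs⟩ := hS₀
  obtain ⟨t, ht⟩ := hT₀
  rw [hS.measure_eq_iSup_isCompact, hT.measure_eq_iSup_isCompact]
  simp only [iSup_and']
  refine ENNReal.biSup_add_biSup_le' ⟨∅, empty_subset _, isCompact_empty⟩
    ⟨∅, empty_subset _, isCompact_empty⟩ fun K ⟨hKS, hK⟩ L ⟨hLT, hL⟩ => ?_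
  calc volume K + volume L ≤ volume (insert s K) + volume (insert t L) :=
        add_le_add (measure_mono (subset_insert _ _)) (measure_mono (subset_insert _ _))
    _ ≤ volume (insert s K + insert t L) :=
        volume_add_volume_le_volume_add_of_isCompact (hK.insert s) (insert_nonempty _ _)
          (hL.insert t) (insert_nonempty _ _)
    _ ≤ volume (S + T) :=
        measure_mono (add_subset_add (insert_subset hs hKS) (insert_subset ht hLT))

theorem ofReal_mul_volume_add_le_volume_smul_add {S T : Set ℝ} (hS : MeasurableSet S)
    (hS₀ : S.Nonempty) (hT : MeasurableSet T) (hT₀ : T.Nonempty) {a b : ℝ} (ha : 0 ≤ a)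
    (hb : 0 ≤ b) :
    ENNReal.ofReal a * volume S + ENNReal.ofReal b * volume T ≤ volume (a • S + b • T) := by
  have := volume_add_volume_le_volume_add (hS.const_smul₀ a) hS₀.smul_set (hT.const_smul₀ b)
    hT₀.smul_set
  simpa only [Measure.addHaar_smul_of_nonneg _ ha, Measure.addHaar_smul_of_nonneg _ hb,
    Module.finrank_self, pow_one] using this

-- Measuring levels relative to the suprema makes every superlevel set below level `1` nonempty,
-- so the one-dimensional Brunn–Minkowski inequality applies to it.
theorem volume_superlevel_add_le {lam : ℝ} (h₀ : 0 < lam) (h₁ : lam < 1) {f g h : ℝ → ℝ≥0∞}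
    (hf : Measurable f) (hg : Measurable g) (hf₀ : ⨆ x, f x ≠ 0) (hf_bdd : ⨆ x, f x ≠ ⊤)
    (hg₀ : ⨆ x, g x ≠ 0) (hg_bdd : ⨆ x, g x ≠ ⊤)
    (hfgh : ∀ a b, f a ^ lam * g b ^ (1 - lam) ≤ h (lam * a + (1 - lam) * b)) {t : ℝ}
    (ht : t < 1) :
    ENNReal.ofReal lam * volume {a | ENNReal.ofReal t * ⨆ x, f x ≤ f a}
        + ENNReal.ofReal (1 - lam) * volume {b | ENNReal.ofReal t * ⨆ x, g x ≤ g b}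
      ≤ volume {y | ENNReal.ofReal t * ((⨆ x, f x) ^ lam * (⨆ x, g x) ^ (1 - lam)) ≤ h y} := by
  refine (ofReal_mul_volume_add_le_volume_smul_add (measurableSet_le measurable_const hf)
    ((lt_iSup_iff.1 (ENNReal.ofReal_mul_lt_self ht hf₀ hf_bdd)).imp fun _ => le_of_lt)
    (measurableSet_le measurable_const hg)
    ((lt_iSup_iff.1 (ENNReal.ofReal_mul_lt_self ht hg₀ hg_bdd)).imp fun _ => le_of_lt)
    h₀.le (sub_pos.2 h₁).le).trans (measure_mono ?_)
  rintro _ ⟨_, ⟨a, ha, rfl⟩, _, ⟨b, hb, rfl⟩, rfl⟩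
  calc ENNReal.ofReal t * ((⨆ x, f x) ^ lam * (⨆ x, g x) ^ (1 - lam))
      = (ENNReal.ofReal t * ⨆ x, f x) ^ lam * (ENNReal.ofReal t * ⨆ x, g x) ^ (1 - lam) := by
        rw [ENNReal.mul_rpow_mul_mul_rpow_one_sub h₀.le h₁.le,
          ENNReal.rpow_mul_rpow_one_sub_self h₀.le h₁.le]
    _ ≤ f a ^ lam * g b ^ (1 - lam) := by gcongr <;> assumption
    _ ≤ h (lam * a + (1 - lam) * b) := hfgh a b

theorem prekopa_leindler {lam : ℝ} (h₀ : 0 < lam) (h₁ : lam < 1) {f g h : ℝ → ℝ≥0∞}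
    (hf : Measurable f) (hg : Measurable g) (hh : Measurable h) (hf_bdd : ⨆ x, f x ≠ ⊤)
    (hg_bdd : ⨆ x, g x ≠ ⊤)
    (hfgh : ∀ a b, f a ^ lam * g b ^ (1 - lam) ≤ h (lam * a + (1 - lam) * b)) :
    (∫⁻ x, f x) ^ lam * (∫⁻ x, g x) ^ (1 - lam) ≤ ∫⁻ x, h x := by
  set Mf := ⨆ x, f x
  set Mg := ⨆ x, g x
  rcases eq_or_ne Mf 0 with hMf₀ | hMf₀
  · simp [ENNReal.iSup_eq_zero.1 hMf₀, ENNReal.zero_rpow_of_pos h₀]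
  rcases eq_or_ne Mg 0 with hMg₀ | hMg₀
  · simp [ENNReal.iSup_eq_zero.1 hMg₀, ENNReal.zero_rpow_of_pos (sub_pos.2 h₁)]
  set c := Mf ^ lam * Mg ^ (1 - lam)
  have hc₀ : c ≠ 0 := mul_ne_zero (ENNReal.rpow_pos (pos_iff_ne_zero.2 hMf₀) hf_bdd).ne'
    (ENNReal.rpow_pos (pos_iff_ne_zero.2 hMg₀) hg_bdd).ne'
  have hc : c ≠ ⊤ := ENNReal.mul_ne_top (ENNReal.rpow_ne_top_of_nonneg h₀.le hf_bdd)
    (ENNReal.rpow_ne_top_of_nonneg (sub_pos.2 h₁).le hg_bdd)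
  set S := fun t : ℝ => volume {a | ENNReal.ofReal t * Mf ≤ f a}
  set T := fun t : ℝ => volume {b | ENNReal.ofReal t * Mg ≤ g b}
  set U := fun t : ℝ => volume {y | ENNReal.ofReal t * c ≤ min (h y) c}
  have hSTU : ∀ t ∈ Ioo (0 : ℝ) 1,
      ENNReal.ofReal lam * S t + ENNReal.ofReal (1 - lam) * T t ≤ U t := fun t ht =>
    (volume_superlevel_add_le h₀ h₁ hf hg hMf₀ hf_bdd hMg₀ hg_bdd hfgh ht.2).trans <|
      measure_mono fun _ hy => le_min hy (mul_le_of_le_one_left' (ENNReal.ofReal_le_one.2 ht.2.le))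
  calc (∫⁻ x, f x) ^ lam * (∫⁻ x, g x) ^ (1 - lam)
      = c * ((∫⁻ t in Ioo 0 1, S t) ^ lam * (∫⁻ t in Ioo 0 1, T t) ^ (1 - lam)) := by
        rw [lintegral_eq_mul_setLIntegral_Ioo_measure_le volume hf hMf₀ hf_bdd (le_iSup f),
          lintegral_eq_mul_setLIntegral_Ioo_measure_le volume hg hMg₀ hg_bdd (le_iSup g),
          ENNReal.mul_rpow_mul_mul_rpow_one_sub h₀.le h₁.le]
    _ ≤ c * (ENNReal.ofReal lam * (∫⁻ t in Ioo 0 1, S t)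
          + ENNReal.ofReal (1 - lam) * ∫⁻ t in Ioo 0 1, T t) := by
        gcongr c * ?_
        exact ENNReal.rpow_mul_rpow_one_sub_le h₀ h₁ _ _
    _ ≤ c * ∫⁻ t in Ioo 0 1, U t := by
        rw [← lintegral_const_mul' _ _ ENNReal.ofReal_ne_top,
          ← lintegral_const_mul' _ _ ENNReal.ofReal_ne_top]
        gcongr c * ?_
        exact (le_lintegral_add _ _).trans (setLIntegral_mono' measurableSet_Ioo hSTU)
    _ = ∫⁻ x, min (h x) c :=
        (lintegral_eq_mul_setLIntegral_Ioo_measure_le volume (hh.min measurable_const) hc₀ hc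
          fun _ => min_le_right _ _).symm
    _ ≤ ∫⁻ x, h x := lintegral_mono fun _ => min_le_left _ _

theorem volume_isLogConcave : (volume : Measure ℝ).IsLogConcave :=
  fun _ _ hA hA₀ hB hB₀ _ h₀ h₁ => (ENNReal.rpow_mul_rpow_one_sub_le h₀ h₁ _ _).trans
    (ofReal_mul_volume_add_le_volume_smul_add hA.measurableSet hA₀ hB.measurableSet hB₀
      h₀.le (sub_pos.2 h₁).le)

theorem volume_prod_isLogConcave : (volume : Measure (ℝ × ℝ)).IsLogConcave := by
  intro A B hA _ hB _ lam h₀ h₁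
  have h₁' : 0 < 1 - lam := sub_pos.2 h₁
  set Q := lam • A + (1 - lam) • B
  have hQ : IsCompact Q := (hA.smul lam).add (hB.smul (1 - lam))
  have hsection : ∀ a b, volume (Prod.mk a ⁻¹' A) ^ lam * volume (Prod.mk b ⁻¹' B) ^ (1 - lam)
      ≤ volume (Prod.mk (lam * a + (1 - lam) * b) ⁻¹' Q) := by
    intro a b
    rcases (Prod.mk a ⁻¹' A).eq_empty_or_nonempty with hAa | hAa
    · simp [hAa, ENNReal.zero_rpow_of_pos h₀]
    rcases (Prod.mk b ⁻¹' B).eq_empty_or_nonempty with hBb | hBb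
    · simp [hBb, ENNReal.zero_rpow_of_pos h₁']
    refine (volume_isLogConcave _ _ (hA.preimage_prodMk_left a) hAa
      (hB.preimage_prodMk_left b) hBb lam h₀ h₁).trans (measure_mono ?_)
    rintro _ ⟨_, ⟨y, hy, rfl⟩, _, ⟨z, hz, rfl⟩, rfl⟩
    exact ⟨lam • (a, y), smul_mem_smul_set hy, (1 - lam) • (b, z), smul_mem_smul_set hz,
      by simp⟩
  have hbdd : ∀ {K : Set (ℝ × ℝ)}, IsCompact K → ⨆ x, volume (Prod.mk x ⁻¹' K) ≠ ⊤ := fun hK =>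
    ne_top_of_le_ne_top (hK.image continuous_snd).measure_lt_top.ne
      (iSup_le fun _ => measure_mono fun y hy => ⟨_, hy, rfl⟩)
  simpa only [Measure.volume_eq_prod, ← Measure.prod_apply hA.measurableSet,
    ← Measure.prod_apply hB.measurableSet, ← Measure.prod_apply hQ.measurableSet] using
    prekopa_leindler h₀ h₁ (measurable_measure_prodMk_left hA.measurableSet)
      (measurable_measure_prodMk_left hB.measurableSet)
      (measurable_measure_prodMk_left hQ.measurableSet) (hbdd hA) (hbdd hB) hsection

end Real

namespace MeasureTheory.Measure.IsLogConcave

variable {E : Type*} [AddCommGroup E] [Module ℝ E] [TopologicalSpace E] [MeasurableSpace E]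
  {μ : Measure E}

theorem smul (hμ : μ.IsLogConcave) (c : ℝ≥0∞) : (c • μ).IsLogConcave := by
  intro A B hA hA₀ hB hB₀ lam h₀ h₁
  simp only [Measure.smul_apply, smul_eq_mul]
  rw [ENNReal.mul_rpow_mul_mul_rpow_one_sub h₀.le h₁.le,
    ENNReal.rpow_mul_rpow_one_sub_self h₀.le h₁.le]
  gcongr c * ?_
  exact hμ A B hA hA₀ hB hB₀ lam h₀ h₁

theorem restrict [OpensMeasurableSpace E] (hμ : μ.IsLogConcave) {C : Set E} (hC : Convex ℝ C)
    (hC' : IsClosed C) : (μ.restrict C).IsLogConcave := by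
  intro A B hA _ hB _ lam h₀ h₁
  simp only [restrict_apply' hC'.measurableSet]
  rcases (A ∩ C).eq_empty_or_nonempty with hAC | hAC
  · simp [hAC, ENNReal.zero_rpow_of_pos h₀]
  rcases (B ∩ C).eq_empty_or_nonempty with hBC | hBC
  · simp [hBC, ENNReal.zero_rpow_of_pos (sub_pos.2 h₁)]
  refine (hμ _ _ (hA.inter_right hC') hAC (hB.inter_right hC') hBC lam h₀ h₁).trans
    (measure_mono ?_)
  rintro _ ⟨_, ⟨x, hx, rfl⟩, _, ⟨y, hy, rfl⟩, rfl⟩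
  exact ⟨add_mem_add (smul_mem_smul_set hx.1) (smul_mem_smul_set hy.1),
    hC hx.2 hy.2 h₀.le (sub_pos.2 h₁).le (by ring)⟩

theorem of_measurePreserving {F : Type*} [AddCommGroup F] [Module ℝ F] [TopologicalSpace F]
    [MeasurableSpace F] [BorelSpace E] [BorelSpace F] {ν : Measure F} (hν : ν.IsLogConcave)
    (e : E ≃L[ℝ] F) (he : MeasurePreserving e μ ν) : μ.IsLogConcave := by
  intro A B hA hA₀ hB hB₀ lam h₀ h₁
  have hμ : ∀ S, μ S = ν (e '' S) := fun S => by
    rw [← he.measure_preimage_equiv (f := e.toHomeomorph.toMeasurableEquiv)]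
    exact congrArg μ (e.preimage_image S).symm
  rw [hμ, hμ, hμ, Set.image_add, image_smul_set, image_smul_set]
  exact hν _ _ (hA.image e.continuous) (hA₀.image _) (hB.image e.continuous) (hB₀.image _)
    lam h₀ h₁

end MeasureTheory.Measure.IsLogConcave

noncomputable def EuclideanSpace.finTwoEquivProd : EuclideanSpace ℝ (Fin 2) ≃L[ℝ] ℝ × ℝ :=
  (EuclideanSpace.equiv (Fin 2) ℝ).trans (ContinuousLinearEquiv.finTwoArrow ℝ ℝ)

theorem EuclideanSpace.finTwoEquivProd_apply (p : EuclideanSpace ℝ (Fin 2)) :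
    finTwoEquivProd p = (p 0, p 1) := rfl

theorem EuclideanSpace.measurePreserving_finTwoEquivProd :
    MeasurePreserving finTwoEquivProd volume volume :=
  (volume_preserving_finTwoArrow ℝ).comp (PiLp.volume_preserving_ofLp (Fin 2))

theorem EuclideanSpace.volume_fin_two_isLogConcave :
    (volume : Measure (EuclideanSpace ℝ (Fin 2))).IsLogConcave :=
  Real.volume_prod_isLogConcave.of_measurePreserving finTwoEquivProd
    measurePreserving_finTwoEquivProd

theorem MeasureTheory.Measure.restrict_smul_le_restrict_smul_self {E : Type*}
    [NormedAddCommGroup E] [NormedSpace ℝ E] [MeasurableSpace E] [BorelSpace E]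
    [FiniteDimensional ℝ E] (μ : Measure E) [μ.IsAddHaarMeasure] {K C : Set E}
    (hC : StarConvex ℝ 0 C) (hKC : μ K = μ C) {t : ℝ} (ht : 0 < t) :
    μ.restrict C (t • K) ≤ μ.restrict C (t • C) := by
  rcases le_total t 1 with ht₁ | ht₁
  · have hsub : t • C ⊆ C := by
      rintro _ ⟨x, hx, rfl⟩
      exact hC.smul_mem hx ht.le ht₁
    calc μ.restrict C (t • K) ≤ μ (t • K) := restrict_apply_le _ _
      _ = μ (t • C) := by rw [addHaar_smul_of_nonneg _ ht.le, addHaar_smul_of_nonneg _ ht.le, hKC]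
      _ = μ.restrict C (t • C) := (restrict_eq_self μ hsub).symm
  · have hsub : C ⊆ t • C := fun x hx => hC.mem_smul hx ht₁
    calc μ.restrict C (t • K) ≤ μ.restrict C univ := measure_mono (subset_univ _)
      _ = μ.restrict C (t • C) := by rw [restrict_apply_univ, restrict_apply_superset hsub]

theorem stmt19
    (Ω : Set (EuclideanSpace ℝ (Fin 2)))
    (hΩ : Ω = {p : EuclideanSpace ℝ (Fin 2) | |p 0| ≤ π / 2 ∧ |p 1| ≤ 1 / 2})
    (μ : Measure (EuclideanSpace ℝ (Fin 2)))
    (hμ : μ = (volume Ω)⁻¹ • volume.restrict Ω) :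
    (∀ A B : Set (EuclideanSpace ℝ (Fin 2)),
        IsCompact A → A.Nonempty → IsCompact B → B.Nonempty →
        ∀ lam : ℝ, 0 < lam → lam < 1 →
          μ A ^ lam * μ B ^ (1 - lam) ≤ μ (lam • A + (1 - lam) • B)) ∧
    volume (Metric.closedBall (0 : EuclideanSpace ℝ (Fin 2)) 1) = ENNReal.ofReal π ∧
    volume Ω = ENNReal.ofReal π ∧
    (∀ t : ℝ, 0 < t →
      μ (t • Metric.closedBall (0 : EuclideanSpace ℝ (Fin 2)) 1) ≤ μ (t • Ω)) ∧
    ¬ Metric.closedBall (0 : EuclideanSpace ℝ (Fin 2)) 1 ⊆ Ω := by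
  set e := EuclideanSpace.finTwoEquivProd
  set R : Set (ℝ × ℝ) := Icc (-(π / 2)) (π / 2) ×ˢ Icc (-(1 / 2)) (1 / 2)
  have hΩR : Ω = e ⁻¹' R := by
    ext p
    simp only [hΩ, R, mem_ofPred_eq, mem_preimage, e, EuclideanSpace.finTwoEquivProd_apply,
      mem_prod, mem_Icc, abs_le]
  have hΩ_closed : IsClosed Ω :=
    hΩR ▸ (isClosed_Icc.prod isClosed_Icc).preimage e.continuous
  have hΩ_convex : Convex ℝ Ω :=
    hΩR ▸ ((convex_Icc _ _).prod (convex_Icc _ _)).linear_preimage e.toLinearMap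
  have hΩ_vol : volume Ω = ENNReal.ofReal π := by
    rw [hΩR, EuclideanSpace.measurePreserving_finTwoEquivProd.measure_preimage
      (measurableSet_Icc.prod measurableSet_Icc).nullMeasurableSet, Measure.volume_eq_prod,
      Measure.prod_prod, Real.volume_Icc, Real.volume_Icc]
    norm_num
  have hball_vol :
      volume (Metric.closedBall (0 : EuclideanSpace ℝ (Fin 2)) 1) = ENNReal.ofReal π := by
    simp
  refine ⟨?_, hball_vol, hΩ_vol, fun t ht => ?_, fun hsub => ?_⟩
  · rw [hμ]
    exact (EuclideanSpace.volume_fin_two_isLogConcave.restrict hΩ_convex hΩ_closed).smul _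
  · rw [hμ, Measure.smul_apply, Measure.smul_apply]
    gcongr _ • ?_
    exact Measure.restrict_smul_le_restrict_smul_self volume
      (hΩ_convex.starConvex (by simp [hΩ]; positivity)) (hball_vol.trans hΩ_vol.symm) ht
  · have := hsub (show EuclideanSpace.single (1 : Fin 2) (1 : ℝ) ∈ Metric.closedBall 0 1 by simp)
    norm_num [hΩ] at this
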